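/- For every real number a and every ε ∈ {1, −1}, the improper Riemann integral lim_{R→∞} ∫_{−R}^{R} e^{i a η − i ε η²} dη exists and equals √π · e^{−iεπ/4} · e^{iεa²/4}. -/

import Mathlib

open MeasureTheory Filter

/-! Completing the square turns the integrand into `exp (-b (η - c)²)` times a constant, with
`b = iε` purely imaginary and `c = εa/2` real, so the problem is the Gaussian integral on the
boundary of the half-plane `Re b > 0`, on which `∫ exp (-b u²) = (π / b)^{1/2}` is classical.
Integrating by parts against `1 / u` gives the tail bound `‖∫_R^S exp (-b u²)‖ ≤ 1 / (‖b‖ R)`,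
uniform on `Re b ≥ 0`; it therefore passes to the limit `b + δ → b` as `δ → 0⁺`, which proves
convergence at `b = iε` with the value `(π / (iε))^{1/2} = √π e^{-iεπ/4}`. -/

open Complex intervalIntegral Set Topology
open scoped Real

lemma pos_of_mem_uIcc {R S u : ℝ} (hR : 0 < R) (hRS : R ≤ S) (hu : u ∈ uIcc R S) : 0 < u :=
  hR.trans_le (uIcc_of_le hRS ▸ hu).1

lemma integral_inv_sq {R S : ℝ} (hR : 0 < R) (hRS : R ≤ S) :
    ∫ u in R..S, (u ^ 2)⁻¹ = 1 / R - 1 / S := by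
  have hpos := fun u => pos_of_mem_uIcc (u := u) hR hRS
  rw [integral_eq_sub_of_hasDerivAt (f := fun u : ℝ => -u⁻¹)
    (fun u hu => (hasDerivAt_inv (hpos u hu).ne').neg.congr_deriv (by ring))
    (intervalIntegrable_inv (fun u hu => (pow_pos (hpos u hu) 2).ne') (by fun_prop))]
  ring

lemma norm_cexp_neg_mul_sq_le_one {b : ℂ} (hb : 0 ≤ b.re) (u : ℝ) :
    ‖cexp (-b * (u : ℂ) ^ 2)‖ ≤ 1 := by
  rw [norm_cexp_neg_mul_sq, Real.exp_le_one_iff, neg_mul, neg_nonpos]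
  exact mul_nonneg hb (sq_nonneg u)

lemma hasDerivAt_cexp_neg_mul_sq_div (b : ℂ) {u : ℝ} (hu : u ≠ 0) :
    HasDerivAt (fun x : ℝ => cexp (-b * (x : ℂ) ^ 2) / x)
      (-2 * b * cexp (-b * (u : ℂ) ^ 2) - cexp (-b * (u : ℂ) ^ 2) / (u : ℂ) ^ 2) u := by
  have hu' : (u : ℂ) ≠ 0 := ofReal_ne_zero.mpr hu
  have h := ((hasDerivAt_pow 2 (u : ℂ)).const_mul (-b)).cexp.fun_div (hasDerivAt_id' (u : ℂ)) hu'
  convert h.comp_ofReal using 1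
  field_simp
  ring

lemma two_mul_integral_cexp_neg_mul_sq (b : ℂ) {R S : ℝ} (hR : 0 < R) (hRS : R ≤ S) :
    2 * b * ∫ u in R..S, cexp (-b * (u : ℂ) ^ 2)
      = cexp (-b * (R : ℂ) ^ 2) / R - cexp (-b * (S : ℂ) ^ 2) / S
        - ∫ u in R..S, cexp (-b * (u : ℂ) ^ 2) / (u : ℂ) ^ 2 := by
  have hpos := fun u => pos_of_mem_uIcc (u := u) hR hRS
  have hmain : Continuous fun u : ℝ => -2 * b * cexp (-b * (u : ℂ) ^ 2) := by fun_prop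
  have hrem : ContinuousOn (fun u : ℝ => cexp (-b * (u : ℂ) ^ 2) / (u : ℂ) ^ 2) (uIcc R S) :=
    (by fun_prop : Continuous fun u : ℝ => cexp (-b * (u : ℂ) ^ 2)).continuousOn.div
      (by fun_prop) fun u hu => pow_ne_zero 2 (ofReal_ne_zero.mpr (hpos u hu).ne')
  have hftc := integral_eq_sub_of_hasDerivAt
    (fun u hu => hasDerivAt_cexp_neg_mul_sq_div b (hpos u hu).ne')
    (hmain.continuousOn.sub hrem).intervalIntegrable
  rw [integral_sub (hmain.intervalIntegrable _ _) hrem.intervalIntegrable,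
    intervalIntegral.integral_const_mul] at hftc
  linear_combination -hftc

lemma norm_integral_cexp_neg_mul_sq_le {b : ℂ} (hb : 0 ≤ b.re) (hb0 : b ≠ 0) {R S : ℝ}
    (hR : 0 < R) (hRS : R ≤ S) :
    ‖∫ u in R..S, cexp (-b * (u : ℂ) ^ 2)‖ ≤ 1 / (‖b‖ * R) := by
  have hboundary : ∀ x : ℝ, 0 < x → ‖cexp (-b * (x : ℂ) ^ 2) / x‖ ≤ 1 / x := fun x hx => by
    rw [norm_div, norm_real, Real.norm_of_nonneg hx.le]
    gcongr
    exact norm_cexp_neg_mul_sq_le_one hb x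
  have hrem : ‖∫ u in R..S, cexp (-b * (u : ℂ) ^ 2) / (u : ℂ) ^ 2‖ ≤ 1 / R - 1 / S := by
    rw [← integral_inv_sq hR hRS]
    refine norm_integral_le_of_norm_le hRS (ae_of_all _ fun u hu => ?_)
      (intervalIntegrable_inv (fun u hu => (pow_pos (pos_of_mem_uIcc hR hRS hu) 2).ne')
        (by fun_prop))
    have hu0 : 0 < u := hR.trans hu.1
    rw [norm_div, norm_pow, norm_real, Real.norm_of_nonneg hu0.le, ← one_div]
    gcongr
    exact norm_cexp_neg_mul_sq_le_one hb u
  have hsum : ‖2 * b * ∫ u in R..S, cexp (-b * (u : ℂ) ^ 2)‖ ≤ 2 / R := by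
    rw [two_mul_integral_cexp_neg_mul_sq b hR hRS]
    calc _ ≤ ‖cexp (-b * (R : ℂ) ^ 2) / R‖ + ‖cexp (-b * (S : ℂ) ^ 2) / S‖
            + ‖∫ u in R..S, cexp (-b * (u : ℂ) ^ 2) / (u : ℂ) ^ 2‖ :=
          (norm_sub_le _ _).trans (add_le_add_left (norm_sub_le _ _) _)
      _ ≤ 1 / R + 1 / S + (1 / R - 1 / S) :=
        add_le_add (add_le_add (hboundary R hR) (hboundary S (hR.trans_le hRS))) hrem
      _ = 2 / R := by ring
  rw [norm_mul, norm_mul, Complex.norm_two] at hsum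
  have hb' : 0 < ‖b‖ := norm_pos_iff.mpr hb0
  calc ‖∫ u in R..S, cexp (-b * (u : ℂ) ^ 2)‖
      = 2 * ‖b‖ * ‖∫ u in R..S, cexp (-b * (u : ℂ) ^ 2)‖ / (2 * ‖b‖) := by field_simp
    _ ≤ 2 / R / (2 * ‖b‖) := by gcongr
    _ = 1 / (‖b‖ * R) := by field_simp

lemma norm_sub_integral_cexp_neg_mul_sq_le_of_re_pos {b : ℂ} (hb : 0 < b.re) {R : ℝ}
    (hR : 0 < R) :
    ‖(π / b) ^ (1 / 2 : ℂ) / 2 - ∫ u in (0 : ℝ)..R, cexp (-b * (u : ℂ) ^ 2)‖ ≤ 1 / (‖b‖ * R) := by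
  have hint : ∀ x y : ℝ, IntervalIntegrable (fun u : ℝ => cexp (-b * (u : ℂ) ^ 2)) volume x y :=
    fun x y => (by fun_prop : Continuous _).intervalIntegrable x y
  have htail : Tendsto (fun S => ∫ u in R..S, cexp (-b * (u : ℂ) ^ 2)) atTop
      (𝓝 ((π / b) ^ (1 / 2 : ℂ) / 2 - ∫ u in (0 : ℝ)..R, cexp (-b * (u : ℂ) ^ 2))) := by
    have h0 := intervalIntegral_tendsto_integral_Ioi 0
      (integrable_cexp_neg_mul_sq hb).integrableOn tendsto_id
    rw [integral_gaussian_complex_Ioi hb] at h0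
    exact (h0.sub_const _).congr fun S => integral_interval_sub_left (hint 0 S) (hint 0 R)
  refine le_of_tendsto htail.norm ((eventually_ge_atTop R).mono fun S hS => ?_)
  exact norm_integral_cexp_neg_mul_sq_le hb.le (ne_zero_of_re_pos hb) hR hS

lemma ofReal_div_mem_slitPlane {x : ℝ} (hx : 0 < x) {b : ℂ} (hb : 0 ≤ b.re) (hb0 : b ≠ 0) :
    (x / b : ℂ) ∈ slitPlane := by
  have hnorm : 0 < normSq b := normSq_pos.mpr hb0
  rw [mem_slitPlane_iff, div_re, div_im]
  simp only [ofReal_re, ofReal_im, zero_mul, zero_div, add_zero, zero_sub, ne_eq, neg_eq_zero,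
    div_eq_zero_iff, mul_eq_zero, hx.ne', hnorm.ne', false_or, or_false]
  rcases hb.lt_or_eq with hre | hre
  · exact Or.inl (by positivity)
  · exact Or.inr fun him => hb0 (Complex.ext hre.symm him)

lemma norm_le_norm_add_ofReal {b : ℂ} (hb : 0 ≤ b.re) {δ : ℝ} (hδ : 0 ≤ δ) :
    ‖b‖ ≤ ‖b + δ‖ := by
  rw [← sq_le_sq₀ (norm_nonneg _) (norm_nonneg _), Complex.sq_norm, Complex.sq_norm,
    normSq_apply, normSq_apply]
  simp only [add_re, ofReal_re, add_im, ofReal_im, add_zero]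
  nlinarith

lemma norm_sub_integral_cexp_neg_mul_sq_le {b : ℂ} (hb : 0 ≤ b.re) (hb0 : b ≠ 0) {R : ℝ}
    (hR : 0 < R) :
    ‖(π / b) ^ (1 / 2 : ℂ) / 2 - ∫ u in (0 : ℝ)..R, cexp (-b * (u : ℂ) ^ 2)‖ ≤ 1 / (‖b‖ * R) := by
  have hshift : Tendsto (fun δ : ℝ => b + δ) (𝓝[>] 0) (𝓝 b) := by
    have : Tendsto (fun δ : ℝ => b + δ) (𝓝 0) (𝓝 (b + (0 : ℝ))) :=
      (continuous_const.add continuous_ofReal).tendsto 0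
    simpa using this.mono_left nhdsWithin_le_nhds
  have hvalue : ContinuousAt (fun z : ℂ => (π / z) ^ (1 / 2 : ℂ) / 2) b :=
    ((continuousAt_cpow_const (ofReal_div_mem_slitPlane Real.pi_pos hb hb0)).comp
      (continuousAt_const.div continuousAt_id hb0)).div_const 2
  have hintegral : Continuous fun z : ℂ => ∫ u in (0 : ℝ)..R, cexp (-z * (u : ℂ) ^ 2) :=
    continuous_parametric_intervalIntegral_of_continuous' (by fun_prop) 0 R
  refine le_of_tendsto ((hvalue.tendsto.comp hshift).sub
    ((hintegral.tendsto b).comp hshift)).norm ?_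
  filter_upwards [self_mem_nhdsWithin] with δ (hδ : 0 < δ)
  have hre : 0 < (b + δ).re := by simp only [add_re, ofReal_re]; linarith
  calc _ ≤ 1 / (‖b + δ‖ * R) := norm_sub_integral_cexp_neg_mul_sq_le_of_re_pos hre hR
    _ ≤ 1 / (‖b‖ * R) := by
      gcongr
      exact norm_le_norm_add_ofReal hb hδ.le

theorem tendsto_integral_cexp_neg_mul_sq {b : ℂ} (hb : 0 ≤ b.re) (hb0 : b ≠ 0) :
    Tendsto (fun R : ℝ => ∫ u in (0 : ℝ)..R, cexp (-b * (u : ℂ) ^ 2)) atTop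
      (𝓝 ((π / b) ^ (1 / 2 : ℂ) / 2)) := by
  rw [tendsto_iff_norm_sub_tendsto_zero]
  refine squeeze_zero' (Eventually.of_forall fun R => norm_nonneg _)
    ((eventually_gt_atTop 0).mono fun R hR => ?_)
    ((tendsto_const_nhds (x := (1 : ℝ))).div_atTop
      (tendsto_id.const_mul_atTop (norm_pos_iff.mpr hb0)))
  rw [norm_sub_rev]
  exact norm_sub_integral_cexp_neg_mul_sq_le hb hb0 hR

theorem tendsto_integral_cexp_neg_mul_sub_sq {b : ℂ} (hb : 0 ≤ b.re) (hb0 : b ≠ 0) (c : ℝ) :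
    Tendsto (fun R : ℝ => ∫ η in (-R)..R, cexp (-b * ((η - c : ℝ) : ℂ) ^ 2)) atTop
      (𝓝 ((π / b) ^ (1 / 2 : ℂ))) := by
  set f : ℝ → ℂ := fun u => cexp (-b * (u : ℂ) ^ 2) with hf
  have hint : ∀ x y : ℝ, IntervalIntegrable f volume x y :=
    fun x y => (by fun_prop : Continuous f).intervalIntegrable x y
  have hsplit : ∀ R : ℝ, ∫ η in (-R)..R, f (η - c)
      = (∫ u in (0 : ℝ)..(R + c), f u) + ∫ u in (0 : ℝ)..(R - c), f u := by
    intro R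
    rw [integral_comp_sub_right, ← integral_add_adjacent_intervals (hint _ 0) (hint 0 _)]
    congr 1
    have heven : ∀ u, f (-u) = f u := fun u => by simp [hf]
    have hreflect := integral_comp_neg (a := 0) (b := R + c) f
    simp only [heven, neg_zero] at hreflect
    rw [hreflect, neg_add', sub_eq_add_neg]
  have hhalf := tendsto_integral_cexp_neg_mul_sq hb hb0
  have hsum := (hhalf.comp (tendsto_atTop_add_const_right _ c tendsto_id)).add
    (hhalf.comp (tendsto_atTop_add_const_right _ (-c) tendsto_id))
  rw [add_halves] at hsum
  exact hsum.congr fun R => (hsplit R).symm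

lemma cpow_one_half_pi_div_I_mul {ε : ℝ} (hε : ε = 1 ∨ ε = -1) :
    ((π : ℂ) / (I * ε)) ^ (1 / 2 : ℂ) = (√π : ℂ) * cexp (-I * ε * (π / 4 : ℝ)) := by
  set z : ℂ := Real.log π - I * ε * (π / 2 : ℝ) with hz
  have hunit : cexp (-(I * ε * (π / 2 : ℝ))) * (I * ε) = 1 := by
    rcases hε with rfl | rfl
    · rw [show -(I * ((1 : ℝ) : ℂ) * (π / 2 : ℝ)) = -(π / 2 * I) by push_cast; ring, exp_neg,
        exp_pi_div_two_mul_I]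
      simp
    · rw [show -(I * ((-1 : ℝ) : ℂ) * (π / 2 : ℝ)) = π / 2 * I by push_cast; ring,
        exp_pi_div_two_mul_I]
      push_cast
      rw [mul_neg_one, mul_neg, I_mul_I, neg_neg]
  have hbase : (π : ℂ) / (I * ε) = cexp z := by
    rw [hz, sub_eq_add_neg, Complex.exp_add, ← ofReal_exp, Real.exp_log Real.pi_pos,
      div_eq_iff (right_ne_zero_of_mul_eq_one hunit), mul_assoc, hunit, mul_one]
  have hlog : log (cexp z) = z := by
    refine log_exp ?_ ?_ <;> rcases hε with rfl | rfl <;> simp [hz] <;> linarith [Real.pi_pos]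
  have hsqrt : (√π : ℂ) = cexp (Real.log π / 2 : ℝ) := by
    rw [← ofReal_exp, Real.sqrt_eq_rpow, Real.rpow_def_of_pos Real.pi_pos]
    ring_nf
  rw [hbase, cpow_def_of_ne_zero (exp_ne_zero _), hlog, hsqrt, ← Complex.exp_add, hz]
  congr 1
  push_cast
  ring

theorem fresnel_integral (a ε : ℝ) (hε : ε = 1 ∨ ε = -1) :
    Tendsto
      (fun R : ℝ => ∫ η in (-R)..R,
        Complex.exp (Complex.I * ((a * η : ℝ) : ℂ) - Complex.I * (ε : ℂ) * (η : ℂ) ^ 2))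
      atTop
      (nhds ((Real.sqrt Real.pi : ℂ) *
        Complex.exp (-Complex.I * (ε : ℂ) * ((Real.pi / 4 : ℝ) : ℂ)) *
        Complex.exp (Complex.I * (ε : ℂ) * ((a ^ 2 / 4 : ℝ) : ℂ)))) := by
  have hε2 : (ε : ℂ) ^ 2 = 1 := by rcases hε with rfl | rfl <;> norm_num
  have hb0 : I * ε ≠ 0 := mul_ne_zero I_ne_zero (by rcases hε with rfl | rfl <;> norm_num)
  have hsquare : ∀ η : ℝ, I * ((a * η : ℝ) : ℂ) - I * ε * (η : ℂ) ^ 2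
      = -(I * ε) * ((η - ε * a / 2 : ℝ) : ℂ) ^ 2 + I * ε * ((a ^ 2 / 4 : ℝ) : ℂ) := fun η => by
    push_cast
    linear_combination (I * ε * a ^ 2 / 4 - I * a * η) * hε2
  have hlim := (tendsto_integral_cexp_neg_mul_sub_sq (b := I * ε) (by simp) hb0
    (ε * a / 2)).mul_const (cexp (I * ε * ((a ^ 2 / 4 : ℝ) : ℂ)))
  rw [cpow_one_half_pi_div_I_mul hε] at hlim
  refine hlim.congr fun R => ?_
  simp only [hsquare, Complex.exp_add, intervalIntegral.integral_mul_const]
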